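/- An infinite word u over a finite alphabet is rich in palindromes if and only if every complete return word of every palindromic factor of u is a palindrome. -/
import Mathlib


open List

/-- The factor of `u` of length `n` starting at position `i`. -/
def word {A : Type*} (u : ℕ → A) (i n : ℕ) : List A :=
  (List.range n).map (fun j => u (i + j))

/-- `w` occurs in `u` at position `i`. -/
def OccursAt {A : Type*} (u : ℕ → A) (w : List A) (i : ℕ) : Prop :=
  w = word u i w.length

/-- `w` is a factor of the infinite word `u`. -/
def IsFactor {A : Type*} (u : ℕ → A) (w : List A) : Prop :=
  ∃ i, OccursAt u w i

/-- Every letter of the alphabet occurs in `u`. -/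
def AllLettersOccur {A : Type*} (u : ℕ → A) : Prop :=
  ∀ a : A, ∃ i, u i = a

/-- The language of `u` is closed under reversal. -/
def ClosedUnderReversal {A : Type*} (u : ℕ → A) : Prop :=
  ∀ w : List A, IsFactor u w → IsFactor u w.reverse

/-- `u` is uniformly recurrent: every factor occurs in every window of some
bounded length. -/
def UniformlyRecurrent {A : Type*} (u : ℕ → A) : Prop :=
  ∀ w : List A, IsFactor u w → ∃ N : ℕ, ∀ i : ℕ, ∃ j : ℕ,
    i ≤ j ∧ j < i + N ∧ OccursAt u w j

/-- Factor complexity: the number of factors of `u` of length `n`. -/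
noncomputable def complexity {A : Type*} (u : ℕ → A) (n : ℕ) : ℕ :=
  Set.ncard {w : List A | w.length = n ∧ IsFactor u w}

/-- Palindromic complexity: the number of palindromic factors of `u` of
length `n`. -/
noncomputable def palComplexity {A : Type*} (u : ℕ → A) (n : ℕ) : ℕ :=
  Set.ncard {w : List A | w.length = n ∧ IsFactor u w ∧ w.reverse = w}

/-- The number of distinct palindromic factors of a finite word
(the empty word included). -/
noncomputable def palCount {A : Type*} (w : List A) : ℕ :=
  Set.ncard {v : List A | v <:+: w ∧ v.reverse = v}

/-- `u` is rich in palindromes. -/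
def Rich {A : Type*} (u : ℕ → A) : Prop :=
  ∀ w : List A, IsFactor u w → palCount w = w.length + 1

/-- `j < k` are two successive occurrences of `w` in `u`. -/
def SuccOccurrences {A : Type*} (u : ℕ → A) (w : List A) (j k : ℕ) : Prop :=
  OccursAt u w j ∧ OccursAt u w k ∧ j < k ∧
    ∀ l : ℕ, j < l → l < k → ¬ OccursAt u w l

/-- The set of return words of the factor `w` in `u`. -/
def returnWords {A : Type*} (u : ℕ → A) (w : List A) : Set (List A) :=
  {v | ∃ j k : ℕ, SuccOccurrences u w j k ∧ v = word u j (k - j)}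

/-- Left extensions of `w` in `u`. -/
def Lext {A : Type*} (u : ℕ → A) (w : List A) : Set A :=
  {a | IsFactor u (a :: w)}

/-- Right extensions of `w` in `u`. -/
def Rext {A : Type*} (u : ℕ → A) (w : List A) : Set A :=
  {b | IsFactor u (w ++ [b])}

/-- Bilateral extensions of `w` in `u`. -/
def Bext {A : Type*} (u : ℕ → A) (w : List A) : Set (A × A) :=
  {p | IsFactor u (p.1 :: (w ++ [p.2]))}

/-- Palindromic extensions of a (palindromic) factor `w` of `u`. -/
def Pext {A : Type*} (u : ℕ → A) (w : List A) : Set (List A) :=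
  {v | ∃ a : A, v = a :: (w ++ [a]) ∧ IsFactor u v}

/-- `w` is a bispecial factor of `u`. -/
def Bispecial {A : Type*} (u : ℕ → A) (w : List A) : Prop :=
  IsFactor u w ∧ 2 ≤ Set.ncard (Lext u w) ∧ 2 ≤ Set.ncard (Rext u w)

/-- The bilateral order of a factor `w` of `u`. -/
noncomputable def bilateralOrder {A : Type*} (u : ℕ → A) (w : List A) : ℤ :=
  (Set.ncard (Bext u w) : ℤ) - Set.ncard (Rext u w) - Set.ncard (Lext u w) + 1

/-- `u` is eventually periodic. -/
def EventuallyPeriodic {A : Type*} (u : ℕ → A) : Prop :=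
  ∃ p : ℕ, 0 < p ∧ ∃ N : ℕ, ∀ n : ℕ, N ≤ n → u (n + p) = u n

/-- `u` is aperiodic. -/
def Aperiodic {A : Type*} (u : ℕ → A) : Prop :=
  ¬ EventuallyPeriodic u

/-- `u` is (1-)balanced. -/
def IsBalanced {A : Type*} [DecidableEq A] (u : ℕ → A) : Prop :=
  ∀ a : A, ∀ w v : List A, IsFactor u w → IsFactor u v → w.length = v.length →
    |(w.count a : ℤ) - (v.count a : ℤ)| ≤ 1

section RichAux

variable {A : Type*}

lemma word_length (u : ℕ → A) (i n : ℕ) : (word u i n).length = n := by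
  simp [word]

lemma word_append (u : ℕ → A) (i m n : ℕ) :
    word u i (m + n) = word u i m ++ word u (i + m) n := by
  unfold word
  rw [List.range_add, List.map_append, List.map_map]
  congr 1
  apply List.map_congr_left
  intro j _
  simp [add_assoc]

lemma word_one (u : ℕ → A) (i : ℕ) : word u i 1 = [u i] := by
  simp [word, List.range_succ]

lemma word_drop (u : ℕ → A) (i n m : ℕ) (h : m ≤ n) :
    (word u i n).drop m = word u (i + m) (n - m) := by
  have h1 : word u i n = word u i m ++ word u (i + m) (n - m) := by
    rw [← word_append]
    congr 1
    omega
  rw [h1, List.drop_left' (word_length u i m)]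

lemma word_take (u : ℕ → A) (i n m : ℕ) (h : m ≤ n) :
    (word u i n).take m = word u i m := by
  have h1 : word u i n = word u i m ++ word u (i + m) (n - m) := by
    rw [← word_append]
    congr 1
    omega
  rw [h1, List.take_left' (word_length u i m)]

lemma occursAt_word (u : ℕ → A) (i n : ℕ) : OccursAt u (word u i n) i := by
  unfold OccursAt
  rw [word_length]

lemma suffix_word (u : ℕ → A) {i j n L : ℕ} (hij : i ≤ j) (hL : j + L = i + n) :
    word u j L <:+ word u i n := by
  refine ⟨word u i (j - i), ?_⟩
  have h1 : n = (j - i) + L := by omega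
  rw [h1, word_append]
  congr 2
  omega

lemma prefix_word (u : ℕ → A) {i m n : ℕ} (h : m ≤ n) :
    word u i m <+: word u i n := by
  refine ⟨word u (i + m) (n - m), ?_⟩
  rw [← word_append]
  congr 1
  omega

lemma eq_of_suffix_word {u : ℕ → A} {v : List A} {i n : ℕ} (h : v <:+ word u i n) :
    v = word u (i + (n - v.length)) v.length := by
  obtain ⟨x, hx⟩ := h
  have hlen : x.length + v.length = n := by
    have := congrArg List.length hx
    simpa [word_length] using this
  have h1 : v = (word u i n).drop x.length := by
    rw [← hx, List.drop_left]
  rw [word_drop u i n x.length (by omega)] at h1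
  have h2 : word u (i + x.length) (n - x.length)
      = word u (i + (n - v.length)) v.length := by
    congr 1 <;> omega
  exact h1.trans h2

lemma eq_of_prefix_word {u : ℕ → A} {v : List A} {i n : ℕ} (h : v <+: word u i n) :
    v = word u i v.length := by
  have hlen : v.length ≤ n := by
    have := h.length_le
    simpa [word_length] using this
  have h1 : v = (word u i n).take v.length := List.prefix_iff_eq_take.mp h
  rw [word_take u i n _ hlen] at h1
  exact h1

lemma infix_word_exists {u : ℕ → A} {v : List A} {i n : ℕ} (h : v <:+: word u i n) :
    ∃ d, d + v.length ≤ n ∧ v = word u (i + d) v.length := by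
  obtain ⟨x, y, hxy⟩ := h
  have hlen : x.length + v.length + y.length = n := by
    have := congrArg List.length hxy
    simp [word_length] at this
    omega
  refine ⟨x.length, by omega, ?_⟩
  have h1 : v <+: (word u i n).drop x.length := by
    refine ⟨y, ?_⟩
    rw [← hxy, List.append_assoc, List.drop_left]
  rw [word_drop u i n x.length (by omega)] at h1
  exact eq_of_prefix_word h1

lemma isFactor_of_infix {u : ℕ → A} {r v : List A} (hr : IsFactor u r) (h : v <:+: r) :
    IsFactor u v := by
  obtain ⟨i, hi⟩ := hr
  rw [hi] at h
  obtain ⟨d, _, hv⟩ := infix_word_exists h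
  exact ⟨i + d, hv⟩

/-- The set of palindromic infixes of `w`. -/
def palSet (w : List A) : Set (List A) := {v : List A | v <:+: w ∧ v.reverse = v}

lemma palCount_eq (w : List A) : palCount w = (palSet w).ncard := rfl

lemma palSet_finite (w : List A) : (palSet w).Finite := by
  classical
  refine Set.Finite.subset (w.sublists.toFinset : Finset (List A)).finite_toSet ?_
  intro v hv
  simp only [List.coe_toFinset, Set.mem_setOf_eq, List.mem_sublists]
  exact hv.1.sublist

lemma palSet_mono {w w' : List A} (h : w <:+: w') : palSet w ⊆ palSet w' :=
  fun v hv => ⟨hv.1.trans h, hv.2⟩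

lemma palCount_nil : palCount ([] : List A) = 1 := by
  have : palSet ([] : List A) = {[]} := by
    ext v
    simp only [palSet, Set.mem_setOf_eq, Set.mem_singleton_iff]
    constructor
    · rintro ⟨h, -⟩
      exact List.sublist_nil.mp h.sublist
    · rintro rfl
      exact ⟨List.infix_refl _, rfl⟩
  rw [palCount_eq, this, Set.ncard_singleton]

lemma suffix_eq_drop {v s : List A} (h : v <:+ s) :
    v = s.drop (s.length - v.length) := by
  obtain ⟨x, rfl⟩ := h
  simp

lemma suffix_of_suffix_le {l1 l2 l3 : List A} (h1 : l1 <:+ l3) (h2 : l2 <:+ l3)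
    (h : l1.length ≤ l2.length) : l1 <:+ l2 :=
  List.suffix_of_suffix_length_le h1 h2 h

/-- Existence of a longest palindromic suffix. -/
lemma exists_lps (s : List A) :
    ∃ P, P <:+ s ∧ P.reverse = P ∧
      ∀ q, q <:+ s → q.reverse = q → q.length ≤ P.length := by
  classical
  set Q : ℕ → Prop := fun m => (s.drop (s.length - m)).reverse = s.drop (s.length - m)
    with hQ
  have hQ0 : Q 0 := by simp [hQ]
  set N := Nat.findGreatest Q s.length with hN
  have hNle : N ≤ s.length := Nat.findGreatest_le _
  have hPlen : (s.drop (s.length - N)).length = N := by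
    rw [List.length_drop]; omega
  refine ⟨s.drop (s.length - N), List.drop_suffix _ _,
    Nat.findGreatest_spec (Nat.zero_le _) hQ0, ?_⟩
  intro q hq hpal
  rw [hPlen]
  have hqlen : q.length ≤ s.length := hq.length_le
  have : Q q.length := by
    show (s.drop (s.length - q.length)).reverse = s.drop (s.length - q.length)
    rw [← suffix_eq_drop hq]
    exact hpal
  exact Nat.le_findGreatest hqlen this

lemma suffix_eq_of_length {v P : List A} (h : v <:+ P) (hl : v.length = P.length) :
    v = P := by
  obtain ⟨x, rfl⟩ := h
  simp only [List.length_append] at hl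
  have hx : x = [] := List.eq_nil_of_length_eq_zero (by omega)
  rw [hx, List.nil_append]

/-- Key lemma: appending one letter adds at most the longest palindromic
suffix as a new palindrome. -/
lemma palSet_concat_subset (t : List A) (a : A) (P : List A)
    (hP : P <:+ t ++ [a]) (hPpal : P.reverse = P)
    (hPmax : ∀ q, q <:+ t ++ [a] → q.reverse = q → q.length ≤ P.length) :
    palSet (t ++ [a]) ⊆ insert P (palSet t) := by
  rintro v ⟨hinf, hpal⟩
  by_cases hvt : v <:+: t
  · exact Set.mem_insert_of_mem _ ⟨hvt, hpal⟩
  have hsuf : v <:+ t ++ [a] := by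
    obtain ⟨x, y, hxy⟩ := hinf
    rcases y.eq_nil_or_concat with rfl | ⟨y', b, rfl⟩
    · exact ⟨x, by simpa using hxy⟩
    · exfalso
      apply hvt
      have h3 : (x ++ (v ++ y')) ++ [b] = t ++ [a] := by
        simpa [List.append_assoc] using hxy
      have h2 : x ++ (v ++ y') = t := by
        have := congrArg List.dropLast h3
        simpa using this
      exact ⟨x, y', by rw [← h2, List.append_assoc]⟩
  have hlen : v.length ≤ P.length := hPmax v hsuf hpal
  have hvP : v <:+ P := suffix_of_suffix_le hsuf hP hlen
  rcases eq_or_lt_of_le hlen with heq | hlt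
  · exact (suffix_eq_of_length hvP heq) ▸ Set.mem_insert _ _
  · exfalso
    apply hvt
    have hpre : v <+: P := by
      rw [← hpal, ← hPpal, List.reverse_prefix]
      exact hvP
    obtain ⟨z, hz⟩ := hpre
    have hzne : z ≠ [] := by
      intro h
      rw [h, List.append_nil] at hz
      rw [hz] at hlt
      omega
    obtain ⟨z', c, rfl⟩ := z.eq_nil_or_concat.resolve_left hzne
    obtain ⟨y, hy⟩ := hP
    rw [← hz] at hy
    have h3 : (y ++ (v ++ z')) ++ [c] = t ++ [a] := by
      simpa [List.append_assoc] using hy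
    have h2 : y ++ (v ++ z') = t := by
      have := congrArg List.dropLast h3
      simpa using this
    exact ⟨y, z', by rw [← h2, List.append_assoc]⟩

lemma palCount_concat_le (t : List A) (a : A) :
    palCount (t ++ [a]) ≤ palCount t + 1 := by
  obtain ⟨P, hP, hPpal, hmax⟩ := exists_lps (t ++ [a])
  have hsub := palSet_concat_subset t a P hP hPpal hmax
  rw [palCount_eq, palCount_eq]
  calc (palSet (t ++ [a])).ncard ≤ (insert P (palSet t)).ncard :=
        Set.ncard_le_ncard hsub ((palSet_finite t).insert P)
    _ ≤ (palSet t).ncard + 1 := Set.ncard_insert_le _ _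

lemma palCount_le (w : List A) : palCount w ≤ w.length + 1 := by
  induction w using List.reverseRecOn with
  | nil => simp [palCount_nil]
  | append_singleton t a ih =>
      have := palCount_concat_le t a
      simp only [List.length_append, List.length_singleton]
      omega

lemma palCount_mono {w w' : List A} (h : w <:+: w') : palCount w ≤ palCount w' := by
  rw [palCount_eq, palCount_eq]
  exact Set.ncard_le_ncard (palSet_mono h) (palSet_finite w')

/-- If the word `t ++ [a]` is rich, then its longest palindromic suffix does
not occur in `t`. -/
lemma lps_not_infix_of_rich {t : List A} {a : A}
    (h : palCount (t ++ [a]) = t.length + 2) (P : List A)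
    (hP : P <:+ t ++ [a]) (hPpal : P.reverse = P)
    (hPmax : ∀ q, q <:+ t ++ [a] → q.reverse = q → q.length ≤ P.length) :
    ¬ P <:+: t := by
  intro hPt
  have hsub := palSet_concat_subset t a P hP hPpal hPmax
  have hsub2 : palSet (t ++ [a]) ⊆ palSet t := by
    intro v hv
    rcases hsub hv with rfl | h2
    · exact ⟨hPt, hPpal⟩
    · exact h2
  have h1 : (palSet (t ++ [a])).ncard ≤ (palSet t).ncard :=
    Set.ncard_le_ncard hsub2 (palSet_finite t)
  have h2 := palCount_le t
  rw [palCount_eq] at h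
  rw [palCount_eq] at h2
  omega

lemma palCount_concat_of_new {t : List A} {a : A} (P : List A)
    (hP : P <:+ t ++ [a]) (hPpal : P.reverse = P) (hPnew : ¬ P <:+: t) :
    palCount (t ++ [a]) = palCount t + 1 := by
  have hle := palCount_concat_le t a
  have hge : (palSet t).ncard + 1 ≤ (palSet (t ++ [a])).ncard := by
    have hins : insert P (palSet t) ⊆ palSet (t ++ [a]) := by
      intro v hv
      rcases Set.mem_insert_iff.mp hv with rfl | h2
      · exact ⟨hP.isInfix, hPpal⟩
      · exact palSet_mono ((t.prefix_append [a]).isInfix) h2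
    have hnm : P ∉ palSet t := fun h => hPnew h.1
    calc (palSet t).ncard + 1 = (insert P (palSet t)).ncard := by
          rw [Set.ncard_insert_of_notMem hnm (palSet_finite t)]
      _ ≤ (palSet (t ++ [a])).ncard :=
          Set.ncard_le_ncard hins (palSet_finite (t ++ [a]))
  rw [palCount_eq, palCount_eq] at *
  omega

lemma occursAt_iff (u : ℕ → A) (w : List A) (i : ℕ) :
    OccursAt u w i ↔ w = word u i w.length := Iff.rfl

end RichAux


/-- `u` is rich iff every complete return word of every
palindromic factor of `u` is a palindrome. -/
theorem stmt3 {A : Type*} [Fintype A] (u : ℕ → A)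
    (hall : AllLettersOccur u) :
    Rich u ↔ ∀ w : List A, IsFactor u w → w.reverse = w →
      ∀ v ∈ returnWords u w, (v ++ w).reverse = v ++ w := by
  constructor
  · -- Forward direction: rich implies complete return words are palindromes
    intro hrich w hwfac hwpal v hv
    obtain ⟨j, k, ⟨hj, hk, hjk, hbet⟩, hveq⟩ := hv
    rw [occursAt_iff] at hj hk
    set L := k - j with hL
    have hkj : j + L = k := by omega
    set n := L + w.length with hn
    have hr : v ++ w = word u j n := by
      rw [hveq, hn, word_append, hkj, ← hk]
    rw [hr]
    have hn1 : n = (n - 1) + 1 := by omega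
    set t := word u j (n - 1) with ht
    set a := u (j + (n - 1)) with ha
    have hsplit : word u j n = t ++ [a] := by
      conv_lhs => rw [hn1]
      rw [word_append, word_one]
    rw [hsplit]
    have htlen : t.length = n - 1 := word_length u j (n - 1)
    have hstlen : (t ++ [a]).length = n := by
      simp only [List.length_append, List.length_singleton, htlen]
      omega
    have hfac : IsFactor u (t ++ [a]) := by
      refine ⟨j, (occursAt_iff u _ j).mpr ?_⟩
      rw [hstlen, ← hsplit]
    have hcount : palCount (t ++ [a]) = t.length + 2 := by
      have h1 := hrich _ hfac
      rw [h1, hstlen, htlen]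
      omega
    obtain ⟨P, hP, hPpal, hPmax⟩ := exists_lps (t ++ [a])
    have hPnew : ¬ P <:+: t := lps_not_infix_of_rich hcount P hP hPpal hPmax
    have hwsuf : w <:+ t ++ [a] := by
      rw [← hsplit, hk]
      exact suffix_word u (le_of_lt hjk) (by omega)
    have hwleP : w.length ≤ P.length := hPmax w hwsuf hwpal
    have hPle : P.length ≤ n := by
      have := hP.length_le
      omega
    by_cases hPfull : P.length = n
    · have hPeq : P = t ++ [a] := suffix_eq_of_length hP (by omega)
      rw [← hPeq]
      exact hPpal
    · exfalso
      have hPlt : P.length < n := by omega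
      have hPocc : P = word u (j + (n - P.length)) P.length := by
        apply eq_of_suffix_word
        rw [← hsplit] at hP
        exact hP
      set m := j + (n - P.length) with hm
      have hwP : w <:+ P := suffix_of_suffix_le hwsuf hP hwleP
      have hwpre : w <+: P := by
        rw [← hwpal, ← hPpal, List.reverse_prefix]
        exact hwP
      have hwne : w.length < P.length := by
        rcases lt_or_eq_of_le hwleP with hlt | heq
        · exact hlt
        · exfalso
          apply hPnew
          rw [← suffix_eq_of_length hwP heq]
          have hwt : w <+: t := by
            rw [hj, ht]
            exact prefix_word u (by omega)
          exact hwt.isInfix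
      have hoccw : OccursAt u w m := by
        rw [occursAt_iff]
        apply eq_of_prefix_word
        rw [← hPocc]
        exact hwpre
      exact hbet m (by omega) (by omega) hoccw
  · -- Backward direction
    intro H r hrfac
    induction r using List.reverseRecOn with
    | nil => simpa using palCount_nil
    | append_singleton t a ih =>
        obtain ⟨i, hi⟩ := hrfac
        rw [occursAt_iff] at hi
        set n := t.length + 1 with hn
        have hstlen : (t ++ [a]).length = n := by
          simp only [List.length_append, List.length_singleton, hn]
        rw [hstlen] at hi
        have htw : t = word u i t.length :=
          eq_of_prefix_word (⟨[a], hi⟩ : t <+: word u i n)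
        have hct := ih ⟨i, (occursAt_iff u t i).mpr htw⟩
        obtain ⟨P, hP, hPpal, hPmax⟩ := exists_lps (t ++ [a])
        have hPnew : ¬ P <:+: t := by
          intro hPt
          have hPlen : P.length ≤ n := by
            have := hP.length_le
            omega
          set k0 := i + (n - P.length) with hk0
          have hPk0 : P = word u k0 P.length := by
            apply eq_of_suffix_word
            rw [← hi]
            exact hP
          have hPt' : P <:+: word u i t.length := by
            rw [← htw]
            exact hPt
          obtain ⟨d, hd, hdw⟩ := infix_word_exists hPt'
          have hdlt : i + d < k0 := by omega
          classical
          set pred : ℕ → Prop := fun l => i + d ≤ l ∧ OccursAt u P l with hpred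
          set jm := Nat.findGreatest pred (k0 - 1) with hjm
          have hjmspec : pred jm := by
            apply Nat.findGreatest_spec (m := i + d) (by omega)
            exact ⟨le_refl _, (occursAt_iff u P (i + d)).mpr hdw⟩
          have hjmle : jm ≤ k0 - 1 := Nat.findGreatest_le _
          have hige : i + d ≤ jm := hjmspec.1
          have hsucc : SuccOccurrences u P jm k0 := by
            refine ⟨hjmspec.2, (occursAt_iff u P k0).mpr hPk0, by omega, ?_⟩
            intro l hl1 hl2 hocc
            exact Nat.findGreatest_is_greatest hl1 (by omega) ⟨by omega, hocc⟩
          have hret : word u jm (k0 - jm) ∈ returnWords u P :=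
            ⟨jm, k0, hsucc, rfl⟩
          have hpal2 := H P ⟨k0, (occursAt_iff u P k0).mpr hPk0⟩ hPpal _ hret
          have hjmk : jm + (k0 - jm) = k0 := by omega
          have hcat : word u jm (k0 - jm) ++ P = word u jm (k0 - jm + P.length) := by
            rw [word_append, hjmk, ← hPk0]
          have hsufpal : word u jm (k0 - jm + P.length) <:+ t ++ [a] := by
            rw [hi]
            exact suffix_word u (by omega) (by omega)
          have hfin := hPmax _ hsufpal (by rw [← hcat]; exact hpal2)
          rw [word_length] at hfin
          omega
        rw [palCount_concat_of_new P hP hPpal hPnew, hct, hstlen]
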